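/- Let $u:\mathbb{T}^2\times[-1,1]\to\mathbb{R}^3$ be a $C^1$ vector field and $f:\mathbb{T}^2\to(-1,1)$ a $C^2$ function. For $x'\in\mathbb{T}^2$ let $\vN(x')=(-\partial_1 f, -\partial_2 f, 1)$ and denote by $\underline{u}(x')=u(x',f(x'))$ the trace of $u$ on the graph of $f$. Then at each point of the graph, $\big((u\cdot\nabla)u\big)\cdot\vN - (\partial_3 u\cdot\vN)(u\cdot\vN) = \underline{u}_1\partial_1(\underline{u}\cdot\vN) + \underline{u}_2\partial_2(\underline{u}\cdot\vN) + \sum_{i,j=1}^2 \underline{u}_i\underline{u}_j\partial_i\partial_j f$, where on the right-hand side $\partial_i$ denotes the tangential derivative of the trace, $\partial_i\underline{g}(x')=\partial_i g(x',f(x'))+\partial_3 g(x',f(x'))\partial_i f(x')$. -/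

import Mathlib

/-! Substituting `u₃ = u·N + u₁ ∂₁f + u₂ ∂₂f` in `(u·∇)u·N` cancels the `∂₃u·N (u·N)` term and
leaves `Σ_{j ≤ 2} u_j (∂_j u + ∂_j f ∂₃u)·N`, which by the chain rule along the graph
`x' ↦ (x', f x')` is `Σ_j u_j ∂_j(ū)·N`. The product rule `∂_j θ = ∂_j ū·N + ū·∂_j N`, with
`∂_j N = -(∂_j ∂₁f, ∂_j ∂₂f, 0)`, then produces the Hessian term. -/

open Finset

/-- Partial derivative in the `i`-th coordinate direction. -/
noncomputable def pd {n : ℕ} (i : Fin n) (g : (Fin n → ℝ) → ℝ) (x : Fin n → ℝ) : ℝ :=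
  fderiv ℝ g x (Pi.single i 1)

section PartialDerivative

variable {n : ℕ} {g h : (Fin n → ℝ) → ℝ} {x : Fin n → ℝ}

lemma pd_const (i : Fin n) (c : ℝ) : pd i (fun _ => c) x = 0 := by
  simp [pd]

lemma pd_fun_neg (i : Fin n) : pd i (fun y => -g y) x = -pd i g x := by
  simp [pd, fderiv_fun_neg]

lemma pd_fun_mul (i : Fin n) (hg : DifferentiableAt ℝ g x) (hh : DifferentiableAt ℝ h x) :
    pd i (fun y => g y * h y) x = pd i g x * h x + g x * pd i h x := by
  simp [pd, fderiv_fun_mul hg hh]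
  ring

lemma pd_fun_sum {ι : Type*} (s : Finset ι) {A : ι → (Fin n → ℝ) → ℝ} (i : Fin n)
    (hA : ∀ k ∈ s, DifferentiableAt ℝ (A k) x) :
    pd i (fun y => ∑ k ∈ s, A k y) x = ∑ k ∈ s, pd i (A k) x := by
  simp [pd, fderiv_fun_sum hA]

lemma pd_fun_sum_mul {m : ℕ} {a b : (Fin n → ℝ) → Fin m → ℝ} (i : Fin n)
    (ha : ∀ k, DifferentiableAt ℝ (fun y => a y k) x)
    (hb : ∀ k, DifferentiableAt ℝ (fun y => b y k) x) :
    pd i (fun y => ∑ k, a y k * b y k) x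
      = ∑ k, (pd i (fun y => a y k) x * b x k + a x k * pd i (fun y => b y k) x) := by
  rw [pd_fun_sum (A := fun k y => a y k * b y k) _ i fun k _ => (ha k).mul (hb k)]
  exact sum_congr rfl fun k _ => pd_fun_mul i (ha k) (hb k)

lemma ContDiff.pd {m : WithTop ℕ∞} (hg : ContDiff ℝ (m + 1) g) (i : Fin n) :
    ContDiff ℝ m (pd i g) :=
  (hg.fderiv_right le_rfl).clm_apply contDiff_const

end PartialDerivative

section Graph

variable {n : ℕ} {f : (Fin n → ℝ) → ℝ} {g : (Fin (n + 1) → ℝ) → ℝ} {x : Fin n → ℝ}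

def graphMap (f : (Fin n → ℝ) → ℝ) (y : Fin n → ℝ) : Fin (n + 1) → ℝ :=
  Fin.snoc y (f y)

lemma graphMap_two (f : (Fin 2 → ℝ) → ℝ) (y : Fin 2 → ℝ) : graphMap f y = ![y 0, y 1, f y] := by
  funext j
  fin_cases j <;> rfl

def graphMapDeriv (f' : (Fin n → ℝ) →L[ℝ] ℝ) : (Fin n → ℝ) →L[ℝ] (Fin (n + 1) → ℝ) :=
  ContinuousLinearMap.pi (Fin.snoc (α := fun _ => (Fin n → ℝ) →L[ℝ] ℝ)
    (fun k => ContinuousLinearMap.proj k) f')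

lemma graphMapDeriv_single (f' : (Fin n → ℝ) →L[ℝ] ℝ) (i : Fin n) :
    graphMapDeriv f' (Pi.single i 1)
      = Pi.single i.castSucc 1 + f' (Pi.single i 1) • Pi.single (Fin.last n) 1 := by
  funext j
  cases j using Fin.lastCases with
  | last => simp [graphMapDeriv]
  | cast k => simp [graphMapDeriv, Pi.single_apply]

lemma hasFDerivAt_graphMap {f' : (Fin n → ℝ) →L[ℝ] ℝ} (hf : HasFDerivAt f f' x) :
    HasFDerivAt (graphMap f) (graphMapDeriv f') x := by
  refine hasFDerivAt_pi'.2 fun j => ?_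
  cases j using Fin.lastCases with
  | last => simpa [graphMap, graphMapDeriv] using hf
  | cast k => simpa [graphMap, graphMapDeriv] using hasFDerivAt_apply k x

lemma differentiableAt_graphMap (hf : DifferentiableAt ℝ f x) :
    DifferentiableAt ℝ (graphMap f) x :=
  (hasFDerivAt_graphMap hf.hasFDerivAt).differentiableAt

lemma pd_comp_graphMap (hg : DifferentiableAt ℝ g (graphMap f x))
    (hf : DifferentiableAt ℝ f x) (i : Fin n) :
    pd i (fun y => g (graphMap f y)) x
      = pd i.castSucc g (graphMap f x) + pd (Fin.last n) g (graphMap f x) * pd i f x := by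
  have hcomp : HasFDerivAt (fun y => g (graphMap f y)) _ x :=
    hg.hasFDerivAt.comp x (hasFDerivAt_graphMap hf.hasFDerivAt)
  rw [pd, hcomp.fderiv, ContinuousLinearMap.comp_apply, graphMapDeriv_single, map_add, map_smul,
    smul_eq_mul, mul_comm]
  rfl

end Graph

/-- Lemma 3.1: pointwise identity relating the normal component of the convective
derivative on the interface `{x₃ = f(x')}` to tangential derivatives of the
scaled normal velocity `θ = ū·N`. -/
theorem convective_normal_identity
    (u : (Fin 3 → ℝ) → Fin 3 → ℝ) (f : (Fin 2 → ℝ) → ℝ)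
    (hu : ContDiff ℝ 1 u) (hf : ContDiff ℝ 2 f)
    (emb : (Fin 2 → ℝ) → Fin 3 → ℝ)
    (hemb : ∀ x', emb x' = ![x' 0, x' 1, f x'])
    (N : (Fin 2 → ℝ) → Fin 3 → ℝ)
    (hN : ∀ x', N x' = ![-(pd 0 f x'), -(pd 1 f x'), 1])
    (ub : (Fin 2 → ℝ) → Fin 3 → ℝ) (hub : ∀ x' i, ub x' i = u (emb x') i)
    (θ : (Fin 2 → ℝ) → ℝ) (hθ : ∀ x', θ x' = ∑ i, ub x' i * N x' i)
    (x' : Fin 2 → ℝ) :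
    (∑ i, (∑ k, u (emb x') k * pd k (fun y => u y i) (emb x')) * N x' i)
      - (∑ i, pd 2 (fun y => u y i) (emb x') * N x' i) * (∑ i, u (emb x') i * N x' i)
    = ub x' 0 * pd 0 θ x' + ub x' 1 * pd 1 θ x'
      + ∑ i : Fin 2, ∑ j : Fin 2,
          ub x' i.castSucc * ub x' j.castSucc * pd i (pd j f) x' := by
  obtain rfl : emb = graphMap f := funext fun y => (hemb y).trans (graphMap_two f y).symm
  have hf₁ : Differentiable ℝ f := hf.differentiable (by norm_num)
  have hu₁ (k : Fin 3) : Differentiable ℝ (fun z => u z k) :=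
    differentiable_pi.1 (hu.differentiable one_ne_zero) k
  have hub₁ (k : Fin 3) : Differentiable ℝ (fun y => ub y k) := by
    simp only [hub]
    exact fun y => (hu₁ k _).fun_comp' y (differentiableAt_graphMap (hf₁ y))
  have hpdf (j : Fin 2) : Differentiable ℝ (pd j f) :=
    (hf.pd (m := 1) j).differentiable one_ne_zero
  have hN₁ (k : Fin 3) : Differentiable ℝ (fun y => N y k) := by
    simp only [hN]
    fin_cases k <;> simp [hpdf]
  have hdub (i : Fin 2) (k : Fin 3) :
      pd i (fun y => ub y k) x' = pd i.castSucc (fun z => u z k) (graphMap f x')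
        + pd 2 (fun z => u z k) (graphMap f x') * pd i f x' := by
    simp only [hub]
    exact pd_comp_graphMap (hu₁ k _) (hf₁ x') i
  have hdθ (i : Fin 2) : pd i θ x'
      = ∑ k, (pd i (fun y => ub y k) x' * N x' k + ub x' k * pd i (fun y => N y k) x') := by
    rw [show θ = fun y => ∑ k, ub y k * N y k from funext hθ]
    exact pd_fun_sum_mul i (fun k => hub₁ k x') (fun k => hN₁ k x')
  rw [hdθ, hdθ]
  simp only [Fin.sum_univ_three, hdub]
  simp only [hN, hub, Fin.sum_univ_two, Matrix.cons_val_zero, Matrix.cons_val_one,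
    Matrix.cons_val_two, Matrix.head_cons, Matrix.tail_cons, pd_fun_neg, pd_const,
    Fin.castSucc_zero, Fin.castSucc_one, Fin.isValue]
  ring
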